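/- arXiv:math/0103226 — 4 statements merged into one kernel-verified Lean document; each statement's English description precedes it below -/
import Mathlib

section
/- Let L be a Lie algebra over a field of characteristic zero, let U(L) be its universal enveloping algebra, and let x, y ∈ L. Then: (i) if ⁅x,y⁆ = 0, then for all non-negative integers a, b one has (x^a/a!)·(y^b/b!) = (y^b/b!)·(x^a/a!) in U(L); (ii) if ⁅x,⁅x,y⁆⁆ = 0 and ⁅y,⁅y,x⁆⁆ = 0, then for all non-negative integers a, b, c one has, in U(L), (−1)^(a+b+c) · (x^a/a!) · (⁅x,y⁆^c/c!) · (y^b/b!) = Σ_{p=0}^{min(a,b)} binom(c+p, p) · (−1)^c · (−1)^(a+b+c−p) · (y^(b−p)/(b−p)!) · (⁅y,x⁆^(c+p)/(c+p)!) · (x^(a−p)/(a−p)!). -/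
/-!
Put `X = ι x`, `Y = ι y`, `Z = ι ⁅x, y⁆` in `U(L)`. In case (ii), `Z` commutes with `X` and `Y`
and `XY = YX + Z`, so `X, Y, Z` satisfy the Heisenberg relations. Normal ordering a product of
divided powers `X^(a) Y^(b)` then yields `∑ₚ Y^(b-p) Z^(p) X^(a-p)`. Multiplying by the central `Z^(c)`, using
`Z^(c) Z^(p) = C(c+p, p) Z^(c+p)` and `ι ⁅y, x⁆ = -Z` gives the formula. Case (i) is the
commutation of powers of commuting elements.
-/

open UniversalEnvelopingAlgebra Finset

theorem Nat.choose_mul_descFactorial_succ (a b p : ℕ) :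
    a.choose (p + 1) * b.descFactorial (p + 1) + a.choose p * b.descFactorial p * (b - p) =
      (a + 1).choose (p + 1) * b.descFactorial (p + 1) := by
  rw [Nat.choose_succ_succ', Nat.descFactorial_succ]
  ring

section Heisenberg

variable {A : Type*} [Ring A] {X Y Z : A}

theorem mul_pow_eq_of_mul_eq_add (hXY : X * Y = Y * X + Z) (hZY : Commute Z Y) (m : ℕ) :
    X * Y ^ m = Y ^ m * X + m • (Y ^ (m - 1) * Z) := by
  induction m with
  | zero => simp
  | succ m ih =>
    rw [pow_succ, ← mul_assoc, ih, add_mul, mul_assoc, hXY, smul_mul_assoc, mul_assoc,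
      hZY.eq, mul_add, ← mul_assoc, ← pow_succ]
    rcases m with _ | m
    · simp
    · rw [Nat.add_sub_cancel, Nat.add_sub_cancel, ← mul_assoc, ← pow_succ]
      simp only [add_nsmul, one_nsmul]
      abel

theorem mul_monomial_eq_of_mul_eq_add (hXY : X * Y = Y * X + Z) (hZX : Commute Z X)
    (hZY : Commute Z Y) (m p q : ℕ) :
    X * (Y ^ m * Z ^ p * X ^ q) =
      Y ^ m * Z ^ p * X ^ (q + 1) + m • (Y ^ (m - 1) * Z ^ (p + 1) * X ^ q) := by
  rw [← mul_assoc, ← mul_assoc, mul_pow_eq_of_mul_eq_add hXY hZY, add_mul, add_mul,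
    smul_mul_assoc, smul_mul_assoc, mul_assoc (Y ^ m), ((hZX.pow_left p).eq).symm]
  simp only [mul_assoc, ← pow_succ']

/-- `a.choose p * b.descFactorial p` counts the ways of contracting `p` of the `a` letters `X`
with `p` of the `b` letters `Y`, each contraction producing a central `Z`. -/
theorem pow_mul_pow_eq_sum_of_mul_eq_add (hXY : X * Y = Y * X + Z) (hZX : Commute Z X)
    (hZY : Commute Z Y) (a b : ℕ) :
    X ^ a * Y ^ b = ∑ p ∈ range (a + 1),
      (a.choose p * b.descFactorial p) • (Y ^ (b - p) * Z ^ p * X ^ (a - p)) := by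
  induction a with
  | zero => simp
  | succ a ih =>
    set f : ℕ → A := fun p ↦ Y ^ (b - p) * Z ^ p * X ^ (a + 1 - p)
    have hstep : ∀ p ∈ range (a + 1),
        X * ((a.choose p * b.descFactorial p) • (Y ^ (b - p) * Z ^ p * X ^ (a - p))) =
          (a.choose p * b.descFactorial p) • f p +
            (a.choose p * b.descFactorial p * (b - p)) • f (p + 1) := by
      intro p hp
      have hpa : a - p + 1 = a + 1 - p := by grind
      rw [mul_smul_comm, mul_monomial_eq_of_mul_eq_add hXY hZX hZY, smul_add, smul_smul, hpa,
        Nat.sub_sub]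
      simp [f, mul_comm]
    have hextend : ∑ p ∈ range (a + 1), (a.choose p * b.descFactorial p) • f p =
        ∑ p ∈ range (a + 2), (a.choose p * b.descFactorial p) • f p := by
      rw [sum_range_succ _ (a + 1), Nat.choose_succ_self, zero_mul, zero_smul, add_zero]
    rw [pow_succ', mul_assoc, ih, mul_sum, sum_congr rfl hstep, sum_add_distrib, hextend]
    show _ = ∑ p ∈ range (a + 2), ((a + 1).choose p * b.descFactorial p) • f p
    rw [sum_range_succ', sum_range_succ' _ (a + 1), add_right_comm, ← sum_add_distrib]
    simp only [← add_smul, Nat.choose_mul_descFactorial_succ, Nat.choose_zero_right]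

end Heisenberg

section DividedPowers

variable (K : Type*) {A : Type*} [Field K] [Ring A] [Algebra K A]

def divPow (n : ℕ) (X : A) : A := (n.factorial : K)⁻¹ • X ^ n

variable {K}

theorem divPow_def (n : ℕ) (X : A) : divPow K n X = (n.factorial : K)⁻¹ • X ^ n := rfl

theorem Commute.divPow_divPow {X Y : A} (h : Commute X Y) (m n : ℕ) :
    Commute (divPow K m X) (divPow K n Y) :=
  ((h.pow_pow m n).smul_left _).smul_right _

theorem divPow_neg (n : ℕ) (X : A) : divPow K n (-X) = (-1 : K) ^ n • divPow K n X := by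
  rw [divPow_def, divPow_def, ← neg_one_smul K X, smul_pow, smul_comm]

variable [CharZero K]

theorem divPow_mul_divPow (m n : ℕ) (X : A) :
    divPow K m X * divPow K n X = ((m + n).choose m : K) • divPow K (m + n) X := by
  have hcoeff : (m.factorial : K)⁻¹ * (n.factorial : K)⁻¹ =
      ((m + n).choose m : K) * ((m + n).factorial : K)⁻¹ := by
    field_simp
    rw [div_eq_div_iff (by simp [Nat.factorial_ne_zero]) (by simp [Nat.factorial_ne_zero])]
    norm_cast
    rw [Nat.choose_symm_add, ← Nat.add_choose_mul_factorial_mul_factorial]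
    ring
  rw [divPow_def, divPow_def, divPow_def, smul_mul_smul, ← pow_add, smul_smul, hcoeff]

theorem divPow_mul_divPow_eq_sum_of_mul_eq_add {X Y Z : A} (hXY : X * Y = Y * X + Z)
    (hZX : Commute Z X) (hZY : Commute Z Y) (a b : ℕ) :
    divPow K a X * divPow K b Y =
      ∑ p ∈ range (min a b + 1), divPow K (b - p) Y * divPow K p Z * divPow K (a - p) X := by
  have hcoeff : ∀ p ∈ range (min a b + 1),
      ((a.factorial : K)⁻¹ * (b.factorial : K)⁻¹ * ((a.choose p * b.descFactorial p : ℕ) : K)) •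
          (Y ^ (b - p) * Z ^ p * X ^ (a - p)) =
        divPow K (b - p) Y * divPow K p Z * divPow K (a - p) X := by
    intro p hp
    have hpa : p ≤ a := by grind
    have hpb : p ≤ b := by grind
    have hscalar :
        (a.factorial : K)⁻¹ * (b.factorial : K)⁻¹ * ((a.choose p * b.descFactorial p : ℕ) : K) =
        ((b - p).factorial : K)⁻¹ * (p.factorial : K)⁻¹ * ((a - p).factorial : K)⁻¹ := by
      field_simp
      rw [div_eq_div_iff (by simp [Nat.factorial_ne_zero]) (by simp [Nat.factorial_ne_zero])]
      norm_cast
      rw [← Nat.choose_mul_factorial_mul_factorial hpa, ← Nat.factorial_mul_descFactorial hpb]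
      ring
    simp only [hscalar, divPow_def, smul_mul_smul]
  have hvanish : ∀ p ∈ range (a + 1), p ∉ range (min a b + 1) →
      ((a.factorial : K)⁻¹ * (b.factorial : K)⁻¹ * ((a.choose p * b.descFactorial p : ℕ) : K)) •
          (Y ^ (b - p) * Z ^ p * X ^ (a - p)) = 0 := by
    intro p hp_le hp_gt
    rw [Nat.descFactorial_eq_zero_iff_lt.2 (by grind)]
    simp
  rw [divPow_def, divPow_def, smul_mul_smul, pow_mul_pow_eq_sum_of_mul_eq_add hXY hZX hZY,
    smul_sum, ← sum_congr rfl hcoeff,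
    sum_subset (range_subset_range.2 (by omega)) hvanish]
  refine sum_congr rfl fun p _ ↦ ?_
  rw [← Nat.cast_smul_eq_nsmul K, smul_smul]

end DividedPowers

namespace UniversalEnvelopingAlgebra

variable {R L : Type*} [CommRing R] [LieRing L] [LieAlgebra R L]

attribute [local instance] LieRing.ofAssociativeRing

theorem ι_lie (u v : L) : ι R ⁅u, v⁆ = ι R u * ι R v - ι R v * ι R u :=
  ((ι R).map_lie u v).trans (Ring.lie_def _ _)

theorem commute_ι_of_lie_eq_zero {u v : L} (h : ⁅u, v⁆ = 0) : Commute (ι R u) (ι R v) := by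
  rw [Commute, SemiconjBy, ← sub_eq_zero, ← ι_lie, h, map_zero]

end UniversalEnvelopingAlgebra

/-- elementary transformations of PBW monomials (Lemma 6.1 of the paper).
`(i)`: if `⁅x,y⁆ = 0` then divided powers of `x` and `y` commute in `U(L)`.
`(ii)`: if `⁅x,⁅x,y⁆⁆ = 0` and `⁅y,⁅y,x⁆⁆ = 0` (the `A₂` configuration), then
`(−1)^(a+b+c) (x^a/a!) (⁅x,y⁆^c/c!) (y^b/b!)
  = Σ_{p=0}^{min a b} C(c+p,p) (−1)^c (−1)^(a+b+c−p) (y^(b−p)/(b−p)!) (⁅y,x⁆^(c+p)/(c+p)!) (x^(a−p)/(a−p)!)`. -/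
theorem pbw_elementary_transformations
    {K : Type*} [Field K] [CharZero K]
    {L : Type*} [LieRing L] [LieAlgebra K L] (x y : L) :
    (⁅x, y⁆ = 0 → ∀ a b : ℕ,
      (((a.factorial : K)⁻¹ • (ι K x : UniversalEnvelopingAlgebra K L) ^ a) *
        ((b.factorial : K)⁻¹ • (ι K y : UniversalEnvelopingAlgebra K L) ^ b))
        = (((b.factorial : K)⁻¹ • (ι K y : UniversalEnvelopingAlgebra K L) ^ b) *
           ((a.factorial : K)⁻¹ • (ι K x : UniversalEnvelopingAlgebra K L) ^ a))) ∧
    (⁅x, ⁅x, y⁆⁆ = 0 → ⁅y, ⁅y, x⁆⁆ = 0 → ∀ a b c : ℕ,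
      ((-1 : K) ^ (a + b + c)) •
        (((a.factorial : K)⁻¹ • (ι K x : UniversalEnvelopingAlgebra K L) ^ a) *
         ((c.factorial : K)⁻¹ • (ι K ⁅x, y⁆ : UniversalEnvelopingAlgebra K L) ^ c) *
         ((b.factorial : K)⁻¹ • (ι K y : UniversalEnvelopingAlgebra K L) ^ b))
        = ∑ p ∈ Finset.range (min a b + 1),
            ((((c + p).choose p : K) * (-1 : K) ^ c * (-1 : K) ^ (a + b + c - p)) •
              ((((b - p).factorial : K)⁻¹ • (ι K y : UniversalEnvelopingAlgebra K L) ^ (b - p)) *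
               (((c + p).factorial : K)⁻¹ • (ι K ⁅y, x⁆ : UniversalEnvelopingAlgebra K L) ^ (c + p)) *
               (((a - p).factorial : K)⁻¹ • (ι K x : UniversalEnvelopingAlgebra K L) ^ (a - p))))) := by
  simp only [← divPow_def]
  refine ⟨fun hxy a b ↦ ((commute_ι_of_lie_eq_zero hxy).divPow_divPow a b).eq,
    fun hxxy hyyx a b c ↦ ?_⟩
  have hXY : ι K x * ι K y = ι K y * ι K x + ι K ⁅x, y⁆ := by rw [ι_lie]; abel
  have hZX : Commute (ι K ⁅x, y⁆) (ι K x) := (commute_ι_of_lie_eq_zero hxxy).symm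
  have hZY : Commute (ι K ⁅x, y⁆) (ι K y) :=
    (commute_ι_of_lie_eq_zero (by rw [← lie_skew x y, lie_neg, hyyx, neg_zero])).symm
  rw [← lie_skew y x, map_neg, ← (hZX.divPow_divPow c a).eq, mul_assoc,
    divPow_mul_divPow_eq_sum_of_mul_eq_add hXY hZX hZY, mul_sum, smul_sum]
  refine sum_congr rfl fun p _ ↦ ?_
  have hsign : (-1 : K) ^ c * (-1) ^ (a + b + c - p) * (-1) ^ (c + p) = (-1) ^ (a + b + c) := by
    rw [← pow_add, ← pow_add, show c + (a + b + c - p) + (c + p) = a + b + c + 2 * c by grind,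
      pow_add, pow_mul, neg_one_sq, one_pow, mul_one]
  rw [← mul_assoc, ← mul_assoc, (hZY.divPow_divPow c (b - p)).eq, mul_assoc (divPow K _ _),
    divPow_mul_divPow, divPow_neg]
  simp only [smul_mul_assoc, mul_smul_comm, smul_smul]
  rw [Nat.choose_symm_add, ← hsign]
  congr 1
  ring
end

section
/- Fix an integer N ≥ 2 and h ∈ {1,…,N−1}. The relation ≻_h is a strict linear order on Σ₊, and it is a normal order: for every triple of integers k < p < l with 1 ≤ k and l ≤ N, either (k,p) ≻_h (k,l) ≻_h (p,l), or (p,l) ≻_h (k,l) ≻_h (k,p). -/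
/-- The set of positive roots of `sl_N`, identified with pairs `(k,l)`, `1 ≤ k < l ≤ N`. -/
def PosRoots (N : ℕ) : Set (ℕ × ℕ) := {p | 1 ≤ p.1 ∧ p.1 < p.2 ∧ p.2 ≤ N}

/-- `regionIdx h p` is `0`, `1`, `2` according to whether `p` lies in
`A_h = {(k,l) : k ≤ h < l}`, `B_h = {(k,l) : l ≤ h}`, or `C_h = {(k,l) : h < k}`. -/
def regionIdx (h : ℕ) (p : ℕ × ℕ) : ℕ :=
  if p.1 ≤ h ∧ h < p.2 then 0 else if p.2 ≤ h then 1 else 2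

/-- The comparison within a region: in `A_h`, `(k,l) ≻ (k′,l′)` iff `l < l′`, or
`l = l′` and `k > k′`; in `B_h`, iff `l > l′`, or `l = l′` and `k > k′`; in `C_h`,
iff `k < k′`, or `k = k′` and `l < l′`. -/
def innerGt (h : ℕ) (p q : ℕ × ℕ) : Prop :=
  if p.1 ≤ h ∧ h < p.2 then p.2 < q.2 ∨ (p.2 = q.2 ∧ q.1 < p.1)
  else if p.2 ≤ h then q.2 < p.2 ∨ (p.2 = q.2 ∧ q.1 < p.1)
  else p.1 < q.1 ∨ (p.1 = q.1 ∧ p.2 < q.2)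

/-- The special order `≻_h` on positive roots of `sl_N`: every element of `A_h` is greater
than every element of `B_h`, which is greater than every element of `C_h`, and within each
region the comparison is `innerGt`. -/
def succOrd (h : ℕ) (p q : ℕ × ℕ) : Prop :=
  regionIdx h p < regionIdx h q ∨ (regionIdx h p = regionIdx h q ∧ innerGt h p q)

/-- for `N ≥ 2` and `1 ≤ h ≤ N−1`, the relation `≻_h` is a strict linear
order on `Σ₊` (irreflexive, transitive, and total with exactly one of `α ≻_h β`,
`β ≻_h α` holding for distinct `α, β`), and it is a normal order: for every triple
`k < p < l` with `1 ≤ k`, `l ≤ N`, the middle root `α_{k,l}` lies between `α_{k,p}`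
and `α_{p,l}`. -/
theorem succOrd_isStrictLinearOrder_and_normal (N h : ℕ) (hN : 2 ≤ N)
    (h1 : 1 ≤ h) (h2 : h ≤ N - 1) :
    (∀ p ∈ PosRoots N, ¬ succOrd h p p) ∧
    (∀ p ∈ PosRoots N, ∀ q ∈ PosRoots N, ∀ r ∈ PosRoots N,
      succOrd h p q → succOrd h q r → succOrd h p r) ∧
    (∀ p ∈ PosRoots N, ∀ q ∈ PosRoots N, p ≠ q →
      (succOrd h p q ∨ succOrd h q p) ∧ ¬ (succOrd h p q ∧ succOrd h q p)) ∧
    (∀ k p l : ℕ, 1 ≤ k → k < p → p < l → l ≤ N →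
      (succOrd h (k, p) (k, l) ∧ succOrd h (k, l) (p, l)) ∨
      (succOrd h (p, l) (k, l) ∧ succOrd h (k, l) (k, p))) := by
  refine ⟨?_, ?_, ?_, ?_⟩
  · rintro ⟨a, b⟩ hp
    simp only [PosRoots, Set.mem_setOf_eq] at hp
    simp only [succOrd, regionIdx, innerGt]
    split_ifs <;> omega
  · rintro ⟨a, b⟩ hp ⟨c, d⟩ hq ⟨e, f⟩ hr
    simp only [PosRoots, Set.mem_setOf_eq] at hp hq hr
    simp only [succOrd, regionIdx, innerGt]
    split_ifs <;> omega
  · rintro ⟨a, b⟩ hp ⟨c, d⟩ hq hne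
    simp only [PosRoots, Set.mem_setOf_eq] at hp hq
    simp only [ne_eq, Prod.mk.injEq, not_and] at hne
    simp only [succOrd, regionIdx, innerGt]
    constructor
    · split_ifs <;> omega
    · split_ifs <;> omega
  · intro k p l hk hkp hpl hlN
    simp only [succOrd, regionIdx, innerGt]
    split_ifs <;> first | omega | (simp only [true_and, and_true, false_and, and_false]; omega)
end

section
/- Fix an integer N ≥ 2, h ∈ {1,…,N−1}, and a pair (k,l) with 1 ≤ k < l ≤ N. Define a_{k,l}(h) to be the number of integers p with k < p < l such that (k,p) ≻_h (p,l). Then: a_{k,l}(h) = 0 if l ≤ h; a_{k,l}(h) = l − k − 1 if h < k; and a_{k,l}(h) = l − h − 1 if k ≤ h < l. -/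
open scoped Classical in
/-- `aCount h k l` is `a_{k,l}(h)`: the number of integers `p` with `k < p < l`
such that `(k,p) ≻_h (p,l)`. -/
noncomputable def aCount (h k l : ℕ) : ℕ :=
  ((Finset.Ioo k l).filter fun p => succOrd h (k, p) (p, l)).card

/-- the explicit values of `a_{k,l}(h)`:
`a_{k,l}(h) = 0` if `l ≤ h`; `a_{k,l}(h) = l − k − 1` if `h < k`; and
`a_{k,l}(h) = l − h − 1` if `k ≤ h < l`. -/
theorem aCount_values (N h k l : ℕ) (hN : 2 ≤ N) (h1 : 1 ≤ h) (h2 : h ≤ N - 1)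
    (hk : 1 ≤ k) (hkl : k < l) (hl : l ≤ N) :
    (l ≤ h → aCount h k l = 0) ∧
    (h < k → aCount h k l = l - k - 1) ∧
    (k ≤ h → h < l → aCount h k l = l - h - 1) := by
  classical
  refine ⟨fun hle => ?_, fun hgt => ?_, fun hkh hhl => ?_⟩
  · rw [aCount, Finset.card_eq_zero, Finset.filter_eq_empty_iff]
    intro p hp
    simp only [Finset.mem_Ioo] at hp
    simp only [succOrd, regionIdx, innerGt]
    split_ifs <;> omega
  · rw [aCount, Finset.filter_true_of_mem, Nat.card_Ioo]
    intro p hp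
    simp only [Finset.mem_Ioo] at hp
    simp only [succOrd, regionIdx, innerGt]
    split_ifs <;> omega
  · rw [aCount]
    have : (Finset.Ioo k l).filter (fun p => succOrd h (k, p) (p, l)) = Finset.Ioo h l := by
      ext p
      simp only [Finset.mem_filter, Finset.mem_Ioo, succOrd, regionIdx, innerGt]
      split_ifs <;> omega
    rw [this, Nat.card_Ioo]
end

section
/- Fix an integer N ≥ 3 and h ∈ {2,…,N−1}. Let L_h and L_{h−1} be the lists enumerating Σ₊ in strictly decreasing order with respect to ≻_h and ≻_{h−1} respectively. Then there exists a finite sequence of moves of the following two kinds transforming L_h into L_{h−1}: (swap move) interchange two adjacent entries (k,l) and (k′,l′) with {k,l} ∩ {k′,l′} = ∅; (A₂ move) replace three consecutive entries (h,l), (k,l), (k,h), where 1 ≤ k < h < l ≤ N, by (k,h), (k,l), (h,l). Moreover the sequence can be chosen so that for every pair (k,l) with 1 ≤ k < h < l ≤ N the A₂ move with those parameters is used exactly once, and all remaining moves are swap moves. -/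
/-- A move in a sequence of elementary transformations: either a swap of two adjacent
roots spanning an `A₁⊕A₁` subsystem, or the `A₂` reversal labeled by a pair `(k,l)`
with `1 ≤ k < h < l ≤ N`. -/
inductive KZMove where
  | swap : KZMove
  | a2 : ℕ → ℕ → KZMove
  deriving DecidableEq

/-- Two roots `(k,l)`, `(k′,l′)` span an `A₁⊕A₁` subsystem iff `{k,l} ∩ {k′,l′} = ∅`. -/
def indexDisjoint (p q : ℕ × ℕ) : Prop :=
  p.1 ≠ q.1 ∧ p.1 ≠ q.2 ∧ p.2 ≠ q.1 ∧ p.2 ≠ q.2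

/-- `applyMove N h m L L'` : the move `m` transforms the list `L` into `L'`.
A swap move interchanges two adjacent entries with disjoint index sets; the `A₂` move
labeled `(k,l)` (with `1 ≤ k < h < l ≤ N`) replaces three consecutive entries
`(h,l), (k,l), (k,h)` by `(k,h), (k,l), (h,l)`. -/
def applyMove (N h : ℕ) : KZMove → List (ℕ × ℕ) → List (ℕ × ℕ) → Prop
  | .swap, L, L' => ∃ (l1 l2 : List (ℕ × ℕ)) (p q : ℕ × ℕ),
      indexDisjoint p q ∧ L = l1 ++ p :: q :: l2 ∧ L' = l1 ++ q :: p :: l2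
  | .a2 k l, L, L' => 1 ≤ k ∧ k < h ∧ h < l ∧ l ≤ N ∧
      ∃ (l1 l2 : List (ℕ × ℕ)),
        L = l1 ++ (h, l) :: (k, l) :: (k, h) :: l2 ∧
        L' = l1 ++ (k, h) :: (k, l) :: (h, l) :: l2

/-- `movesChain N h ms L L'` : the sequence of moves `ms`, applied one after another,
transforms `L` into `L'`. -/
def movesChain (N h : ℕ) : List KZMove → List (ℕ × ℕ) → List (ℕ × ℕ) → Prop
  | [], L, L' => L = L'
  | m :: ms, L, L' => ∃ Lmid, applyMove N h m L Lmid ∧ movesChain N h ms Lmid L'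

/-!
Each list is determined by its sortedness, so it suffices to transform the explicit list
`A_h B_h C_h`. In `A_h` the column `l > h` reads `(h,l), (h-1,l), …, (1,l)`, and `B_h` begins
with `(h-1,h), …, (1,h)`. These roots are moved to the front, `(h-1,h)` first. Travelling left
through column `l`, the root `(k,h)` commutes with every `(j,l)`, `j ∉ {k,h}`; the earlier
passes have moved `(h,l)` down next to `(k,l)`, so `(k,h)` meets `(h,l), (k,l)` consecutively,
exactly once, and the `A₂` move labelled `(k,l)` reverses the three roots. Afterwards each
`(h,l)` ends its column and commutes with everything up to `C_h`, so swaps collect these roots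
into the first row `(h,h+1), …, (h,N)` of `C_{h-1}`.
-/

open List

/-- `column l a n = [(a+n-1, l), …, (a+1, l), (a, l)]`. -/
def column (l a n : ℕ) : List (ℕ × ℕ) :=
  (range' a n).reverse.map (·, l)

/-- The `≻_h`-decreasing enumerations of `A_h`, `B_h` and `C_h`. -/
def partA (N h : ℕ) : List (ℕ × ℕ) :=
  (range' (h + 1) (N - h)).flatMap (column · 1 h)

def partB (h : ℕ) : List (ℕ × ℕ) :=
  (range' 1 h).reverse.flatMap (fun l => column l 1 (l - 1))

def partC (N h : ℕ) : List (ℕ × ℕ) :=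
  (range' (h + 1) (N - h)).flatMap (fun k => (range' (k + 1) (N - k)).map (k, ·))

def canonicalList (N h : ℕ) : List (ℕ × ℕ) :=
  partA N h ++ partB h ++ partC N h

section Column

variable {l a n : ℕ}

lemma mem_column {p : ℕ × ℕ} : p ∈ column l a n ↔ p.2 = l ∧ a ≤ p.1 ∧ p.1 < a + n := by
  simp only [column, mem_map, mem_reverse, mem_range'_1]
  constructor
  · rintro ⟨i, hi, rfl⟩
    exact ⟨rfl, hi⟩
  · rintro ⟨hl, hi⟩
    exact ⟨p.1, hi, by rw [← hl]⟩

lemma column_zero : column l a 0 = [] := rfl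

lemma column_succ : column l a (n + 1) = (n + a, l) :: column l a n := by
  simp [column, range'_concat, Nat.add_comm]

lemma column_succ' : column l a (n + 1) = column l (a + 1) n ++ [(a, l)] := by
  simp [column, range'_succ]

lemma pairwise_column : (column l a n).Pairwise (fun p q => q.1 < p.1) := by
  simpa [column, pairwise_reverse, pairwise_map] using pairwise_lt_range' (s := a) (n := n)

end Column

section Membership

variable {N h : ℕ} {p : ℕ × ℕ}

lemma mem_partA : p ∈ partA N h ↔ 1 ≤ p.1 ∧ p.1 ≤ h ∧ h < p.2 ∧ p.2 ≤ N := by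
  simp only [partA, mem_flatMap, mem_range'_1, mem_column]
  constructor
  · rintro ⟨l, hl, rfl, hp⟩
    omega
  · rintro ⟨h₁, h₂, h₃, h₄⟩
    exact ⟨p.2, by omega, rfl, by omega⟩

lemma mem_partB : p ∈ partB h ↔ 1 ≤ p.1 ∧ p.1 < p.2 ∧ p.2 ≤ h := by
  simp only [partB, mem_flatMap, mem_reverse, mem_range'_1, mem_column]
  constructor
  · rintro ⟨l, hl, rfl, hp⟩
    omega
  · rintro ⟨h₁, h₂, h₃⟩
    exact ⟨p.2, by omega, rfl, by omega⟩

lemma mem_partC : p ∈ partC N h ↔ h < p.1 ∧ p.1 < p.2 ∧ p.2 ≤ N := by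
  simp only [partC, mem_flatMap, mem_map, mem_range'_1]
  constructor
  · rintro ⟨k, hk, l, hl, rfl⟩
    simp only
    omega
  · rintro ⟨h₁, h₂, h₃⟩
    exact ⟨p.1, by omega, p.2, by omega, rfl⟩

lemma mem_canonicalList (hhN : h ≤ N) :
    p ∈ canonicalList N h ↔ 1 ≤ p.1 ∧ p.1 < p.2 ∧ p.2 ≤ N := by
  simp only [canonicalList, mem_append, mem_partA, mem_partB, mem_partC]
  omega

end Membership

section Sorted

variable {N h : ℕ} {p q : ℕ × ℕ}

lemma succOrd_of_regionIdx_lt (hpq : regionIdx h p < regionIdx h q) : succOrd h p q :=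
  Or.inl hpq

lemma succOrd_of_mem_A (hp : p.1 ≤ h ∧ h < p.2) (hq : q.1 ≤ h ∧ h < q.2)
    (hpq : p.2 < q.2 ∨ p.2 = q.2 ∧ q.1 < p.1) : succOrd h p q := by
  unfold succOrd regionIdx innerGt
  rw [if_pos hp, if_pos hp, if_pos hq]
  omega

lemma succOrd_of_mem_B (hp : p.2 ≤ h) (hq : q.2 ≤ h)
    (hpq : q.2 < p.2 ∨ p.2 = q.2 ∧ q.1 < p.1) : succOrd h p q := by
  simp only [succOrd, regionIdx, innerGt]
  split_ifs <;> omega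

lemma succOrd_of_mem_C (hp : h < p.1) (hq : h < q.1) (hp' : p.1 < p.2) (hq' : q.1 < q.2)
    (hpq : p.1 < q.1 ∨ p.1 = q.1 ∧ p.2 < q.2) : succOrd h p q := by
  simp only [succOrd, regionIdx, innerGt]
  split_ifs <;> omega

lemma succOrd_asymm (hpq : succOrd h p q) (hqp : succOrd h q p) : False := by
  simp only [succOrd, regionIdx, innerGt] at hpq hqp
  split_ifs at hpq hqp <;> omega

lemma pairwise_partA : (partA N h).Pairwise (succOrd h) := by
  refine pairwise_flatMap.2 ⟨fun l hl => pairwise_column.imp_of_mem ?_, ?_⟩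
  · intro p q hp hq hpq
    simp only [mem_range'_1, mem_column] at hl hp hq
    exact succOrd_of_mem_A (by omega) (by omega) (by omega)
  · refine (pairwise_lt_range' 1).imp_of_mem fun hl hl' hll' p hp q hq => ?_
    simp only [mem_range'_1, mem_column] at hl hl' hp hq
    exact succOrd_of_mem_A (by omega) (by omega) (by omega)

lemma pairwise_partB : (partB h).Pairwise (succOrd h) := by
  refine pairwise_flatMap.2 ⟨fun l hl => pairwise_column.imp_of_mem ?_, ?_⟩
  · intro p q hp hq hpq
    simp only [mem_reverse, mem_range'_1, mem_column] at hl hp hq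
    exact succOrd_of_mem_B (by omega) (by omega) (by omega)
  · refine pairwise_reverse.2 <|
      (pairwise_lt_range' 1).imp_of_mem fun hl hl' hll' p hp q hq => ?_
    simp only [mem_range'_1, mem_column] at hl hl' hp hq
    exact succOrd_of_mem_B (by omega) (by omega) (by omega)

lemma pairwise_partC : (partC N h).Pairwise (succOrd h) := by
  refine pairwise_flatMap.2 ⟨fun k hk => ?_, ?_⟩
  · refine pairwise_map.2 ((pairwise_lt_range' 1).imp_of_mem fun hl hl' hll' => ?_)
    simp only [mem_range'_1] at hk hl hl'
    exact succOrd_of_mem_C (by omega) (by omega) (by omega) (by omega) (by omega)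
  · refine (pairwise_lt_range' 1).imp_of_mem fun hk hk' hkk' p hp q hq => ?_
    simp only [mem_range'_1, mem_map] at hk hk' hp hq
    obtain ⟨l, hl, rfl⟩ := hp
    obtain ⟨l', hl', rfl⟩ := hq
    exact succOrd_of_mem_C (by omega) (by omega) (by omega) (by omega) (by omega)

lemma pairwise_canonicalList : (canonicalList N h).Pairwise (succOrd h) := by
  refine pairwise_append.2 ⟨pairwise_append.2 ⟨pairwise_partA, pairwise_partB, ?_⟩,
    pairwise_partC, ?_⟩
  · intro p hp q hq
    rw [mem_partA] at hp
    rw [mem_partB] at hq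
    exact succOrd_of_regionIdx_lt (by simp only [regionIdx]; split_ifs <;> omega)
  · intro p hp q hq
    rw [mem_append, mem_partA, mem_partB] at hp
    rw [mem_partC] at hq
    exact succOrd_of_regionIdx_lt (by simp only [regionIdx]; split_ifs <;> omega)

lemma eq_canonicalList_of_pairwise {L : List (ℕ × ℕ)} (hhN : h ≤ N)
    (hL : L.Pairwise (succOrd h)) (hmem : ∀ p, p ∈ L ↔ 1 ≤ p.1 ∧ p.1 < p.2 ∧ p.2 ≤ N) :
    L = canonicalList N h := by
  have hnodup (L' : List (ℕ × ℕ)) (h' : L'.Pairwise (succOrd h)) : L'.Nodup :=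
    h'.imp fun {p _} hpq => by rintro rfl; exact succOrd_asymm hpq hpq
  refine Perm.eq_of_pairwise (fun _ _ _ _ hpq hqp => (succOrd_asymm hpq hqp).elim) hL
    pairwise_canonicalList ?_
  refine (perm_ext_iff_of_nodup (hnodup _ hL) (hnodup _ pairwise_canonicalList)).2 fun p => ?_
  rw [hmem, mem_canonicalList hhN]

end Sorted

lemma applyMove_frame {N h : ℕ} {m : KZMove} {L L' : List (ℕ × ℕ)} (hm : applyMove N h m L L')
    (l₁ l₂ : List (ℕ × ℕ)) : applyMove N h m (l₁ ++ L ++ l₂) (l₁ ++ L' ++ l₂) :=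
  match m, hm with
  | .swap, ⟨a, b, p, q, hpq, hL, hL'⟩ =>
    ⟨l₁ ++ a, b ++ l₂, p, q, hpq, by simp [hL], by simp [hL']⟩
  | .a2 _ _, ⟨hk, hkh, hhl, hlN, a, b, hL, hL'⟩ =>
    ⟨hk, hkh, hhl, hlN, l₁ ++ a, b ++ l₂, by simp [hL], by simp [hL']⟩

def MovesTo (N h : ℕ) (w : List KZMove) (L L' : List (ℕ × ℕ)) : Prop :=
  ∃ ms, movesChain N h ms L L' ∧ ms.filter (· != KZMove.swap) = w

namespace MovesTo

variable {N h : ℕ} {w w' : List KZMove} {L L' L'' : List (ℕ × ℕ)}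

lemma refl (L : List (ℕ × ℕ)) : MovesTo N h [] L L :=
  ⟨[], rfl, rfl⟩

lemma trans (h₁ : MovesTo N h w L L') (h₂ : MovesTo N h w' L' L'') :
    MovesTo N h (w ++ w') L L'' := by
  obtain ⟨ms, hms, rfl⟩ := h₁
  obtain ⟨ms', hms', rfl⟩ := h₂
  refine ⟨ms ++ ms', ?_, filter_append ms ms'⟩
  induction ms generalizing L with
  | nil => exact (show L = L' from hms) ▸ hms'
  | cons m ms ih =>
    obtain ⟨M, hm, hM⟩ := hms
    exact ⟨M, hm, ih hM⟩

lemma swap {p q : ℕ × ℕ} (hpq : indexDisjoint p q) : MovesTo N h [] [p, q] [q, p] :=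
  ⟨[.swap], ⟨[q, p], ⟨[], [], p, q, hpq, rfl, rfl⟩, rfl⟩, rfl⟩

lemma a2 {k l : ℕ} (hk : 1 ≤ k) (hkh : k < h) (hhl : h < l) (hlN : l ≤ N) :
    MovesTo N h [.a2 k l] [(h, l), (k, l), (k, h)] [(k, h), (k, l), (h, l)] :=
  ⟨[.a2 k l], ⟨_, ⟨hk, hkh, hhl, hlN, [], [], rfl, rfl⟩, rfl⟩, rfl⟩

lemma frame (hL : MovesTo N h w L L') (l₁ l₂ : List (ℕ × ℕ)) :
    MovesTo N h w (l₁ ++ L ++ l₂) (l₁ ++ L' ++ l₂) := by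
  obtain ⟨ms, hms, rfl⟩ := hL
  refine ⟨ms, ?_, rfl⟩
  induction ms generalizing L with
  | nil => exact congrArg (l₁ ++ · ++ l₂) hms
  | cons m ms ih =>
    obtain ⟨M, hm, hM⟩ := hms
    exact ⟨l₁ ++ M ++ l₂, applyMove_frame hm l₁ l₂, ih hM⟩

end MovesTo

section Moves

variable {N h : ℕ}

lemma movesTo_pass_left {p : ℕ × ℕ} {s : List (ℕ × ℕ)} (hs : ∀ q ∈ s, indexDisjoint q p) :
    MovesTo N h [] (s ++ [p]) (p :: s) := by
  induction s with
  | nil => exact .refl _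
  | cons q s ih =>
    have hs' := forall_mem_cons.1 hs
    have pass : MovesTo N h [] (q :: (s ++ [p])) (q :: p :: s) := by
      simpa using (ih hs'.2).frame [q] []
    have swap : MovesTo N h [] (q :: p :: s) (p :: q :: s) := by
      simpa using (MovesTo.swap hs'.1).frame [] s
    simpa using pass.trans swap

lemma movesTo_pass_right {p : ℕ × ℕ} {s : List (ℕ × ℕ)} (hs : ∀ q ∈ s, indexDisjoint p q) :
    MovesTo N h [] (p :: s) (s ++ [p]) := by
  induction s with
  | nil => exact .refl _
  | cons q s ih =>
    have hs' := forall_mem_cons.1 hs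
    have swap : MovesTo N h [] (p :: q :: s) (q :: p :: s) := by
      simpa using (MovesTo.swap hs'.1).frame [] s
    have pass : MovesTo N h [] (q :: p :: s) (q :: (s ++ [p])) := by
      simpa using (ih hs'.2).frame [q] []
    simpa using swap.trans pass

/-- Column `l` of `A_h` once `(h-1, h), …, (k+1, h)` have been moved past it:
`[(h-1, l), …, (k+1, l), (h, l), (k, l), …, (1, l)]`. -/
def block (h l k : ℕ) : List (ℕ × ℕ) :=
  column l (k + 1) (h - 1 - k) ++ (h, l) :: column l 1 k

lemma movesTo_block {k l : ℕ} (hk : 1 ≤ k) (hkh : k < h) (hhl : h < l) (hlN : l ≤ N) :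
    MovesTo N h [.a2 k l] (block h l k ++ [(k, h)]) ((k, h) :: block h l (k - 1)) := by
  obtain ⟨j, rfl⟩ : ∃ j, k = j + 1 := ⟨k - 1, by omega⟩
  set upper := column l (j + 2) (h - 2 - j)
  set lower := column l 1 j
  have hblock : block h l (j + 1) = upper ++ (h, l) :: (j + 1, l) :: lower := by
    simp [block, upper, lower, column_succ, show h - 1 - (j + 1) = h - 2 - j by omega]
  have hblock' : block h l (j + 1 - 1) = upper ++ (j + 1, l) :: (h, l) :: lower := by
    simp [block, upper, lower, show h - 1 - j = h - 2 - j + 1 by omega, column_succ']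
  have pass_lower : MovesTo N h [] (upper ++ (h, l) :: (j + 1, l) :: (lower ++ [(j + 1, h)]))
      (upper ++ (h, l) :: (j + 1, l) :: (j + 1, h) :: lower) := by
    have := movesTo_pass_left (N := N) (h := h) (p := (j + 1, h)) (s := lower) fun q hq => by
      simp only [lower, mem_column] at hq; simp only [indexDisjoint]; omega
    simpa using this.frame (upper ++ [(h, l), (j + 1, l)]) []
  have reverse_A2 : MovesTo N h [.a2 (j + 1) l]
      (upper ++ (h, l) :: (j + 1, l) :: (j + 1, h) :: lower)
      (upper ++ (j + 1, h) :: (j + 1, l) :: (h, l) :: lower) := by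
    simpa using (MovesTo.a2 hk hkh hhl hlN).frame upper lower
  have pass_upper : MovesTo N h [] (upper ++ (j + 1, h) :: (j + 1, l) :: (h, l) :: lower)
      ((j + 1, h) :: (upper ++ (j + 1, l) :: (h, l) :: lower)) := by
    have := movesTo_pass_left (N := N) (h := h) (p := (j + 1, h)) (s := upper) fun q hq => by
      simp only [upper, mem_column] at hq; simp only [indexDisjoint]; omega
    simpa using this.frame [] ((j + 1, l) :: (h, l) :: lower)
  rw [hblock, hblock']
  simpa using (pass_lower.trans reverse_A2).trans pass_upper

end Moves

section Phases

variable {N h : ℕ} {Ls : List ℕ}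

lemma movesTo_pass_blocks {k : ℕ} (hk : 1 ≤ k) (hkh : k < h) (hLs : ∀ l ∈ Ls, h < l ∧ l ≤ N) :
    MovesTo N h (Ls.map (KZMove.a2 k)).reverse (Ls.flatMap (block h · k) ++ [(k, h)])
      ((k, h) :: Ls.flatMap (block h · (k - 1))) := by
  induction Ls with
  | nil => exact .refl _
  | cons l Ls ih =>
    have hLs' := forall_mem_cons.1 hLs
    have pass_rest : MovesTo N h (Ls.map (KZMove.a2 k)).reverse
        (block h l k ++ (Ls.flatMap (block h · k) ++ [(k, h)]))
        (block h l k ++ (k, h) :: Ls.flatMap (block h · (k - 1))) := by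
      simpa using (ih hLs'.2).frame (block h l k) []
    have pass_l : MovesTo N h [.a2 k l] (block h l k ++ (k, h) :: Ls.flatMap (block h · (k - 1)))
        ((k, h) :: (block h l (k - 1) ++ Ls.flatMap (block h · (k - 1)))) := by
      simpa using (movesTo_block hk hkh hLs'.1.1 hLs'.1.2).frame [] (Ls.flatMap (block h · (k - 1)))
    simpa using pass_rest.trans pass_l

/-- The labels of the `A₂` moves made while `(k, h), …, (1, h)` pass the columns `l ∈ Ls`. -/
def a2Word (Ls : List ℕ) : ℕ → List KZMove
  | 0 => []
  | k + 1 => (Ls.map (KZMove.a2 (k + 1))).reverse ++ a2Word Ls k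

lemma mem_a2Word {k : ℕ} {m : KZMove} :
    m ∈ a2Word Ls k ↔ ∃ i l, m = .a2 i l ∧ 1 ≤ i ∧ i ≤ k ∧ l ∈ Ls := by
  induction k with
  | zero => simp [a2Word]
  | succ k ih =>
    simp only [a2Word, mem_append, mem_reverse, mem_map, ih]
    constructor
    · rintro (⟨l, hl, rfl⟩ | ⟨i, l, rfl, hi, hik, hl⟩)
      · exact ⟨k + 1, l, rfl, by omega, le_rfl, hl⟩
      · exact ⟨i, l, rfl, hi, by omega, hl⟩
    · rintro ⟨i, l, rfl, hi, hik, hl⟩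
      rcases Nat.lt_or_ge i (k + 1) with hik' | hik'
      · exact .inr ⟨i, l, rfl, hi, by omega, hl⟩
      · exact .inl ⟨l, hl, by rw [show i = k + 1 by omega]⟩

lemma nodup_a2Word (hLs : Ls.Nodup) (k : ℕ) : (a2Word Ls k).Nodup := by
  induction k with
  | zero => exact nodup_nil
  | succ k ih =>
    refine nodup_append.2 ⟨nodup_reverse.2 (hLs.map fun _ _ e => (KZMove.a2.inj e).2),
      ih, ?_⟩
    rintro _ ha _ hb rfl
    obtain ⟨l, -, rfl⟩ := mem_map.1 (mem_reverse.1 ha)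
    obtain ⟨i, l', he, -, hik, -⟩ := mem_a2Word.1 hb
    cases he
    omega

lemma movesTo_extract (hLs : ∀ l ∈ Ls, h < l ∧ l ≤ N) {k : ℕ} (hkh : k < h) :
    MovesTo N h (a2Word Ls k) (Ls.flatMap (block h · k) ++ column h 1 k)
      (column h 1 k ++ Ls.flatMap (block h · 0)) := by
  induction k with
  | zero => simpa [column_zero, a2Word] using MovesTo.refl _
  | succ k ih =>
    have pass_blocks : MovesTo N h (Ls.map (KZMove.a2 (k + 1))).reverse
        (Ls.flatMap (block h · (k + 1)) ++ (k + 1, h) :: column h 1 k)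
        ((k + 1, h) :: (Ls.flatMap (block h · k) ++ column h 1 k)) := by
      simpa using (movesTo_pass_blocks (by omega) hkh hLs).frame [] (column h 1 k)
    have extract_rest : MovesTo N h (a2Word Ls k)
        ((k + 1, h) :: (Ls.flatMap (block h · k) ++ column h 1 k))
        ((k + 1, h) :: (column h 1 k ++ Ls.flatMap (block h · 0))) := by
      simpa using (ih (by omega)).frame [(k + 1, h)] []
    rw [column_succ]
    exact pass_blocks.trans extract_rest

lemma movesTo_collect (hLs : ∀ l ∈ Ls, h < l) (hnodup : Ls.Nodup) {mid : List (ℕ × ℕ)}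
    (hmid : ∀ l ∈ Ls, ∀ q ∈ mid, indexDisjoint (h, l) q) :
    MovesTo N h [] (Ls.flatMap (block h · 0) ++ mid)
      (Ls.flatMap (column · 1 (h - 1)) ++ mid ++ Ls.map (h, ·)) := by
  induction Ls with
  | nil => simpa using MovesTo.refl mid
  | cons l Ls ih =>
    have hLs' := forall_mem_cons.1 hLs
    have hmid' := forall_mem_cons.1 hmid
    have hnodup' := nodup_cons.1 hnodup
    have collect_rest : MovesTo N h []
        (column l 1 (h - 1) ++ (h, l) :: (Ls.flatMap (block h · 0) ++ mid))
        (column l 1 (h - 1) ++ (h, l) :: (Ls.flatMap (column · 1 (h - 1)) ++ mid ++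
          Ls.map (h, ·))) := by
      simpa using (ih hLs'.2 hnodup'.2 hmid'.2).frame (column l 1 (h - 1) ++ [(h, l)]) []
    have pass_l : MovesTo N h []
        (column l 1 (h - 1) ++ (h, l) :: (Ls.flatMap (column · 1 (h - 1)) ++ mid ++
          Ls.map (h, ·)))
        (column l 1 (h - 1) ++ (Ls.flatMap (column · 1 (h - 1)) ++ mid) ++ (h, l) ::
          Ls.map (h, ·)) := by
      have := movesTo_pass_right (N := N) (h := h) (p := (h, l))
        (s := Ls.flatMap (column · 1 (h - 1)) ++ mid) fun q hq => by
          rcases mem_append.1 hq with hq | hq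
          · obtain ⟨l', hl', hq⟩ := mem_flatMap.1 hq
            have := hLs'.2 l' hl'
            have : l' ≠ l := fun e => hnodup'.1 (e ▸ hl')
            simp only [mem_column] at hq
            simp only [indexDisjoint]
            omega
          · exact hmid'.1 q hq
      simpa using this.frame (column l 1 (h - 1)) (Ls.map (h, ·))
    simpa [block, column_zero] using collect_rest.trans pass_l

end Phases

lemma movesTo_canonicalList {N h : ℕ} (hh : 2 ≤ h) (hhN : h < N) :
    MovesTo N h (a2Word (range' (h + 1) (N - h)) (h - 1))
      (canonicalList N h) (canonicalList N (h - 1)) := by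
  obtain ⟨g, rfl⟩ : ∃ g, h = g + 2 := ⟨h - 2, by omega⟩
  set Ls := range' (g + 3) (N - (g + 2)) with hLs_def
  have hLs : ∀ l ∈ Ls, g + 2 < l ∧ l ≤ N := fun l hl => by
    rw [hLs_def, mem_range'_1] at hl
    omega
  have hrange : range' (g + 2) (N - (g + 1)) = (g + 2) :: Ls := by
    rw [show N - (g + 1) = N - (g + 2) + 1 by omega, range'_succ]
  have hA : partA N (g + 2) = Ls.flatMap (block (g + 2) · (g + 1)) := by
    refine congrArg (flatMap · Ls) (funext fun l => ?_)
    simp [block, column_succ, column_zero]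
  have hB : partB (g + 2) = column (g + 2) 1 (g + 1) ++ partB (g + 1) := by
    simp [partB, range'_concat, show 1 + (g + 1) = g + 2 by omega]
  have hA' : partA N (g + 1) = column (g + 2) 1 (g + 1) ++ Ls.flatMap (column · 1 (g + 1)) := by
    simp [partA, hrange]
  have hC' : partC N (g + 1) = Ls.map (g + 2, ·) ++ partC N (g + 2) := by
    simp [partC, hrange, Ls]
  have extract := (movesTo_extract hLs (k := g + 1) (by omega)).frame []
    (partB (g + 1) ++ partC N (g + 2))
  have collect := (movesTo_collect (N := N) (fun l hl => (hLs l hl).1) nodup_range'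
    (mid := partB (g + 1)) fun l hl q hq => by
      have := hLs l hl
      rw [mem_partB] at hq
      simp only [indexDisjoint]
      omega).frame (column (g + 2) 1 (g + 1)) (partC N (g + 2))
  simp only [canonicalList, show g + 2 - 1 = g + 1 by omega, hA, hB, hA', hC']
  simp only [show g + 2 - 1 = g + 1 by omega, nil_append, append_assoc] at extract collect ⊢
  simpa using extract.trans collect

theorem exists_move_sequence_between_special_orders_general (N h : ℕ)
    (hh2 : 2 ≤ h) (hh : h ≤ N - 1)
    (Lh Lh1 : List (ℕ × ℕ))
    (hsorted : Lh.Pairwise (succOrd h)) (hsorted1 : Lh1.Pairwise (succOrd (h - 1)))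
    (hmem : ∀ p : ℕ × ℕ, p ∈ Lh ↔ (1 ≤ p.1 ∧ p.1 < p.2 ∧ p.2 ≤ N))
    (hmem1 : ∀ p : ℕ × ℕ, p ∈ Lh1 ↔ (1 ≤ p.1 ∧ p.1 < p.2 ∧ p.2 ≤ N)) :
    ∃ ms : List KZMove, movesChain N h ms Lh Lh1 ∧
      (∀ k l : ℕ, 1 ≤ k → k < h → h < l → l ≤ N →
        ms.count (KZMove.a2 k l) = 1) ∧
      (∀ m ∈ ms, m ≠ KZMove.swap →
        ∃ k l : ℕ, m = KZMove.a2 k l ∧ 1 ≤ k ∧ k < h ∧ h < l ∧ l ≤ N) := by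
  obtain rfl := eq_canonicalList_of_pairwise (by omega) hsorted hmem
  obtain rfl := eq_canonicalList_of_pairwise (by omega) hsorted1 hmem1
  obtain ⟨ms, hchain, hword⟩ := movesTo_canonicalList (N := N) hh2 (by omega)
  refine ⟨ms, hchain, fun k l hk hkh hhl hlN => ?_, fun m hm hne => ?_⟩
  · rw [← count_filter (p := (· != KZMove.swap)) rfl, hword]
    exact count_eq_one_of_mem (nodup_a2Word nodup_range' _)
      (mem_a2Word.2 ⟨k, l, rfl, hk, by omega, mem_range'_1.2 (by omega)⟩)
  · have hm' : m ∈ a2Word (range' (h + 1) (N - h)) (h - 1) :=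
      hword ▸ mem_filter.2 ⟨hm, bne_iff_ne.2 hne⟩
    obtain ⟨k, l, rfl, hk, hkh, hl⟩ := mem_a2Word.1 hm'
    rw [mem_range'_1] at hl
    exact ⟨k, l, rfl, hk, by omega, by omega, by omega⟩

/-- for `N ≥ 3` and `2 ≤ h ≤ N − 1`, if `L_h` and `L_{h−1}` enumerate the
positive roots `{(k,l) : 1 ≤ k < l ≤ N}` in strictly decreasing order with respect to
`≻_h` and `≻_{h−1}` respectively, then there is a finite sequence of swap moves and
`A₂` moves transforming `L_h` into `L_{h−1}`, in which for every `(k,l)` with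
`1 ≤ k < h < l ≤ N` the `A₂` move labeled `(k,l)` is used exactly once, and all
remaining moves are swap moves. -/
theorem exists_move_sequence_between_special_orders (N h : ℕ)
    (hN : 3 ≤ N) (hh2 : 2 ≤ h) (hh : h ≤ N - 1)
    (Lh Lh1 : List (ℕ × ℕ))
    (hsorted : Lh.Pairwise (succOrd h)) (hsorted1 : Lh1.Pairwise (succOrd (h - 1)))
    (hmem : ∀ p : ℕ × ℕ, p ∈ Lh ↔ (1 ≤ p.1 ∧ p.1 < p.2 ∧ p.2 ≤ N))
    (hmem1 : ∀ p : ℕ × ℕ, p ∈ Lh1 ↔ (1 ≤ p.1 ∧ p.1 < p.2 ∧ p.2 ≤ N))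
    (hnodup : Lh.Nodup) (hnodup1 : Lh1.Nodup) :
    ∃ ms : List KZMove, movesChain N h ms Lh Lh1 ∧
      (∀ k l : ℕ, 1 ≤ k → k < h → h < l → l ≤ N →
        ms.count (KZMove.a2 k l) = 1) ∧
      (∀ m ∈ ms, m ≠ KZMove.swap →
        ∃ k l : ℕ, m = KZMove.a2 k l ∧ 1 ≤ k ∧ k < h ∧ h < l ∧ l ≤ N) :=
  exists_move_sequence_between_special_orders_general N h hh2 hh Lh Lh1 hsorted hsorted1 hmem hmem1
end
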